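/- Let k ≥ 1 and m ≥ 1, and let h, r, t be segmented embeddings. If every odd-indexed segment of r vanishes (r_x = 0 for all odd x), then the SEEK scoring function is symmetric in the head and tail: f₄(h, r, t) = f₄(t, r, h). In particular, the even segments of the relation embedding preserve the symmetry property of relations. -/

import Mathlib

open Finset

/-- Multi-linear dot product of three vectors in ℝ^m. -/
def mdot {m : ℕ} (a b c : Fin m → ℝ) : ℝ := ∑ i : Fin m, a i * b i * c i

/-- Sign s_{x,y}: -1 if x is odd and x + y ≥ k, else 1. -/
def sSign {k : ℕ} (x y : Fin k) : ℝ :=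
  if x.val % 2 = 1 ∧ k ≤ x.val + y.val then -1 else 1

/-- Tail index w_{x,y}: y if x even, (x+y) mod k if x odd. -/
def wIdx {k : ℕ} (x y : Fin k) : Fin k :=
  if x.val % 2 = 0 then y else ⟨(x.val + y.val) % k, Nat.mod_lt _ x.pos⟩

/-- SEEK scoring function f₄. -/
def f4 {k m : ℕ} (h r t : Fin k → Fin m → ℝ) : ℝ :=
  ∑ x : Fin k, ∑ y : Fin k, sSign x y * mdot (r x) (h y) (t (wIdx x y))

/-- All-segments scoring function f₂. -/
def f2 {k m : ℕ} (h r t : Fin k → Fin m → ℝ) : ℝ :=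
  ∑ x : Fin k, ∑ y : Fin k, ∑ w : Fin k, mdot (r x) (h y) (t w)

/-- Signed scoring function f₃. -/
def f3 {k m : ℕ} (h r t : Fin k → Fin m → ℝ) : ℝ :=
  ∑ x : Fin k, ∑ y : Fin k, ∑ w : Fin k, sSign x y * mdot (r x) (h y) (t w)

/-! Only the even segments of `r` contribute, and for even `x` the term of `f₄` is the unsigned
`⟨r_x, h_y, t_y⟩`, which is symmetric in its last two arguments. -/

theorem mdot_comm_right {m : ℕ} (a b c : Fin m → ℝ) : mdot a b c = mdot a c b :=
  sum_congr rfl fun _ _ => mul_right_comm _ _ _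

@[simp]
theorem mdot_zero_left {m : ℕ} (b c : Fin m → ℝ) : mdot 0 b c = 0 := by
  simp [mdot]

section EvenRow

variable {k : ℕ} {x : Fin k}

theorem sSign_of_even (hx : x.val % 2 = 0) (y : Fin k) : sSign x y = 1 := by
  rw [sSign, if_neg (by omega)]

theorem wIdx_of_even (hx : x.val % 2 = 0) (y : Fin k) : wIdx x y = y := by
  rw [wIdx, if_pos hx]

end EvenRow

theorem f4_symm_of_odd_zero_general (k m : ℕ)
    (h r t : Fin k → Fin m → ℝ) (hr : ∀ x : Fin k, x.val % 2 = 1 → r x = 0) :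
    f4 h r t = f4 t r h := by
  refine sum_congr rfl fun x _ => sum_congr rfl fun y _ => ?_
  rcases Nat.mod_two_eq_zero_or_one x.val with hx | hx
  · rw [sSign_of_even hx, wIdx_of_even hx, mdot_comm_right]
  · simp [hr x hx]

/-- If every odd-indexed segment of r vanishes, then f₄ is symmetric in head and tail:
the even segments of the relation embedding preserve the symmetry property. -/
theorem f4_symm_of_odd_zero (k m : ℕ) (hk : 1 ≤ k) (hm : 1 ≤ m)
    (h r t : Fin k → Fin m → ℝ) (hr : ∀ x : Fin k, x.val % 2 = 1 → r x = 0) :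
    f4 h r t = f4 t r h :=
  f4_symm_of_odd_zero_general k m h r t hr
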